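/- Let θ : A → A^λ be a primitive substitution of constant length λ ≥ 2 with θ(a₀)_0 = a₀, fixed point u ∈ A^ℕ, and column number c(θ) = 1. Then for every ε > 0 there exist k ≥ 1 and a λ^k-periodic sequence v ∈ A^ℕ with d_W(u, v) < ε; in particular, u is Weyl rationally almost periodic. -/

import Mathlib

open Filter Topology

/-- `substIter θ l k a j` is the `j`-th letter of `θ^k(a)`, where `θ : A → A^l` is a
substitution of constant length `l` (the letters of `θ(a)` being `θ a 0, …, θ a (l-1)`).
It is meaningful for `j < l ^ k` and satisfies
`θ^{k+1}(a)_{j'·l + r} = θ(θ^k(a)_{j'})_r`. -/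
def substIter {A : Type*} (θ : A → ℕ → A) (l : ℕ) : ℕ → A → ℕ → A
  | 0, a, _ => a
  | k + 1, a, j => θ (substIter θ l k a (j / l)) (j % l)

/-- A substitution of constant length `l` is primitive if some iterate of every letter
contains every letter. -/
def SubstPrimitive {A : Type*} (θ : A → ℕ → A) (l : ℕ) : Prop :=
  ∃ k, 1 ≤ k ∧ ∀ a b : A, ∃ j, j < l ^ k ∧ substIter θ l k a j = b

/-- Primitivity of a substitution restricted to a sub-alphabet `S`. -/
def SubstPrimitiveOn {A : Type*} (θ : A → ℕ → A) (l : ℕ) (S : Set A) : Prop :=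
  ∃ k, 1 ≤ k ∧ ∀ a ∈ S, ∀ b ∈ S, ∃ j, j < l ^ k ∧ substIter θ l k a j = b

/-- The column number of a substitution of constant length `l`, restricted to the
sub-alphabet `S`: the minimal cardinality of a column set `{θ^k(a)_j : a ∈ S}`. -/
noncomputable def columnNumberOn {A : Type*} (θ : A → ℕ → A) (l : ℕ) (S : Set A) : ℕ :=
  sInf { n : ℕ | ∃ k, 1 ≤ k ∧ ∃ j, j < l ^ k ∧
    ((fun a => substIter θ l k a j) '' S).ncard = n }

/-- The column number `c(θ)` of a substitution of constant length `l`. -/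
noncomputable def columnNumber {A : Type*} (θ : A → ℕ → A) (l : ℕ) : ℕ :=
  columnNumberOn θ l Set.univ

/-- The one-sided fixed point `u` of `θ` obtained by iterating `θ` at a letter `a₀`
with `θ(a₀)_0 = a₀`: `u n = θ^k(a₀)_n` for any `k` with `n < l^k`. -/
def substFixedPoint {A : Type*} (θ : A → ℕ → A) (l : ℕ) (a₀ : A) : ℕ → A :=
  fun n => substIter θ l (n + 1) a₀ n

/-- The height `h(θ)`: the largest `m ≥ 1` coprime to `l` dividing
`gcd {r ≥ 1 : u[r] = u[0]}`, i.e. dividing every return time of `u[0]`. -/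
noncomputable def substHeight {A : Type*} (θ : A → ℕ → A) (l : ℕ) (a₀ : A) : ℕ :=
  sSup { m : ℕ | 1 ≤ m ∧ Nat.Coprime m l ∧
    ∀ r : ℕ, 1 ≤ r → substFixedPoint θ l a₀ r = substFixedPoint θ l a₀ 0 → m ∣ r }

/-- The subshift `X_θ ⊆ A^ℤ`: all `x` each of whose finite blocks occurs in some
`θ^k(a)`. -/
def subshift {A : Type*} (θ : A → ℕ → A) (l : ℕ) : Set (ℤ → A) :=
  { x | ∀ (i : ℤ) (n : ℕ), ∃ k, 1 ≤ k ∧ ∃ a : A, ∃ j : ℕ, j + n ≤ l ^ k ∧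
      ∀ m : ℕ, m < n → x (i + (m : ℤ)) = substIter θ l k a (j + m) }

/-- The subshift `X_x ⊆ A^ℤ` generated by a one-sided sequence `x ∈ A^ℕ`: all `z`
each of whose finite blocks occurs in `x`. -/
def subshiftOf {A : Type*} (x : ℕ → A) : Set (ℤ → A) :=
  { z | ∀ (i : ℤ) (n : ℕ), ∃ j : ℕ, ∀ m : ℕ, m < n → z (i + (m : ℤ)) = x (j + m) }

/-- The left shift on `A^ℤ`. -/
def shift {A : Type*} (x : ℤ → A) : ℤ → A := fun n => x (n + 1)

/-- A bounded arithmetic function. -/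
def BoundedSeq (u : ℕ → ℂ) : Prop := ∃ C : ℝ, ∀ n, ‖u n‖ ≤ C

/-- A multiplicative arithmetic function: `u(mn) = u(m)u(n)` for coprime `m, n`. -/
def MultiplicativeSeq (u : ℕ → ℂ) : Prop :=
  ∀ m n : ℕ, Nat.Coprime m n → u (m * n) = u m * u n

/-- An aperiodic arithmetic function: zero mean along every arithmetic progression. -/
def AperiodicSeq (u : ℕ → ℂ) : Prop :=
  ∀ a b : ℕ, 1 ≤ a →
    Tendsto (fun N : ℕ => (N : ℂ)⁻¹ * ∑ n ∈ Finset.Icc 1 N, u (a * n + b)) atTop (nhds 0)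

/-- The Weyl pseudo-metric
`d_W(x,y) = limsup_N sup_{ℓ ≥ 1} (1/N)·#{ℓ ≤ n < ℓ+N : x n ≠ y n}`. -/
noncomputable def weylDist {B : Type*} (x y : ℕ → B) : ℝ :=
  limsup (fun N : ℕ =>
    ⨆ ℓ : ℕ, ⨆ _ : 1 ≤ ℓ,
      (({ n : ℕ | ℓ ≤ n ∧ n < ℓ + N ∧ x n ≠ y n }.ncard : ℝ) / N)) atTop

/-- A periodic sequence. -/
def IsPeriodicSeq {B : Type*} (v : ℕ → B) : Prop :=
  ∃ p, 1 ≤ p ∧ ∀ n, v (n + p) = v n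

/-- Weyl rational almost periodicity: a `d_W`-limit of periodic sequences. -/
def WRAPSeq {B : Type*} (x : ℕ → B) : Prop :=
  ∀ ε : ℝ, 0 < ε → ∃ v : ℕ → B, IsPeriodicSeq v ∧ weylDist x v < ε

/-- The family `𝒳(θ)` of column sets realizing the column number of `θ`. -/
noncomputable def columnSets {A : Type*} (θ : A → ℕ → A) (l : ℕ) : Set (Set A) :=
  { M | (∃ k, 1 ≤ k ∧ ∃ j, j < l ^ k ∧ M = (fun a => substIter θ l k a j) '' Set.univ) ∧
        M.ncard = columnNumber θ l }

/-- The synchronizing part `~θ` of `θ`, as a substitution on subsets of the alphabet: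
`~θ(M)_j = {θ(a)_j : a ∈ M}`. -/
def synchPart {A : Type*} (θ : A → ℕ → A) : Set A → ℕ → Set A :=
  fun M j => (fun a => θ a j) '' M

/-- The joining `θ ∨ ζ` of two substitutions of the same constant length. -/
def joinSub {A B : Type*} (θ : A → ℕ → A) (ζ : B → ℕ → B) : A × B → ℕ → A × B :=
  fun p j => (θ p.1 j, ζ p.2 j)

/-- The pure base `θ^{(h)}` of `θ`: a substitution of length `l` on blocks of length `h`,
`θ^{(h)}(w)_j = θ(w)[jh, (j+1)h−1]`, where `θ(w)` is the concatenation
`θ(w_0)…θ(w_{h-1})`. -/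
def pureBase {A : Type*} (θ : A → ℕ → A) (l h : ℕ) : (Fin h → A) → ℕ → (Fin h → A) :=
  fun w j i => θ (w ⟨(j * h + i.val) / l % h, Nat.mod_lt _ i.pos⟩) ((j * h + i.val) % l)

/-- Iterated cocycle `σ^{(k)}`, with `σ^{(1)} = σ` and
`σ^{(k+1)}(M, j₁·l + j₂) = σ^{(k)}(M, j₁) ∘ σ(~θ^k(M)_{j₁}, j₂)`. -/
def sigmaIter {X : Type*} {c : ℕ} (tilde : X → ℕ → X)
    (σ : X → ℕ → Equiv.Perm (Fin c)) (l : ℕ) : ℕ → X → ℕ → Equiv.Perm (Fin c)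
  | 0, _, _ => 1
  | k + 1, M, j =>
      sigmaIter tilde σ l k M (j / l) * σ (substIter tilde l k M (j / l)) (j % l)

/-- The group extension substitution `Θ̂(g, M)_j = (g ∘ σ(M,j), ~θ(M)_j)`. -/
def hatTheta {X : Type*} {c : ℕ} (tilde : X → ℕ → X)
    (σ : X → ℕ → Equiv.Perm (Fin c)) : Equiv.Perm (Fin c) × X → ℕ → Equiv.Perm (Fin c) × X :=
  fun p j => (p.1 * σ p.2 j, tilde p.2 j)

/-- The group `G` generated by the cocycle values `σ(M, j)`, `M ∈ 𝒳`, `j < l`. -/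
def cocycleGroup {X : Type*} {c : ℕ} (σ : X → ℕ → Equiv.Perm (Fin c)) (l : ℕ) :
    Subgroup (Equiv.Perm (Fin c)) :=
  Subgroup.closure { g | ∃ M : X, ∃ j, j < l ∧ g = σ M j }


/-! Column number one means that some column `{θ^{k₀}(a)_{j₀} : a ∈ A}` is a singleton. A position
`j < l^{m k₀}` has a non-constant column in `θ^{m k₀}` only if each of its `m` base-`l^{k₀}` digits
has a non-constant column in `θ^{k₀}`, so the non-constant positions have density at most `ρ^m`,
where `ρ < 1` is their density in `θ^{k₀}`. At a position with constant column the letter of `u`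
does not depend on the letter it descends from, so `u` agrees with the `l^{m k₀}`-periodic
repetition of `θ^{m k₀}(a₀)` off a set of residues of density `ρ^m`; this bounds the Weyl
distance. -/

open Finset

section Iterates

variable {A : Type*} (θ : A → ℕ → A) (l : ℕ)

theorem substIter_add (k₁ k₂ : ℕ) (a : A) (j : ℕ) :
    substIter θ l (k₁ + k₂) a j
      = substIter θ l k₂ (substIter θ l k₁ a (j / l ^ k₂)) (j % l ^ k₂) := by
  induction k₂ generalizing j with
  | zero => simp [substIter]
  | succ k ih =>
    rw [← Nat.add_assoc, substIter, ih, substIter, Nat.div_div_eq_div_mul, ← pow_succ',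
      Nat.mod_mod_of_dvd j (dvd_pow_self l k.succ_ne_zero), pow_succ',
      Nat.mod_mul_right_div_self]

variable {θ l}

theorem substIter_zero_of_fixed {a₀ : A} (ha₀ : θ a₀ 0 = a₀) (k : ℕ) :
    substIter θ l k a₀ 0 = a₀ := by
  induction k with
  | zero => rfl
  | succ k ih => simp [substIter, ih, ha₀]

theorem substIter_eq_of_le {a₀ : A} (ha₀ : θ a₀ 0 = a₀) {K K' n : ℕ} (hK : K ≤ K')
    (hn : n < l ^ K) : substIter θ l K' a₀ n = substIter θ l K a₀ n := by
  obtain ⟨d, rfl⟩ := Nat.exists_eq_add_of_le' hK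
  rw [substIter_add, Nat.div_eq_of_lt hn, Nat.mod_eq_of_lt hn, substIter_zero_of_fixed ha₀]

theorem substIter_eq_substFixedPoint (hl : 2 ≤ l) {a₀ : A} (ha₀ : θ a₀ 0 = a₀) {K n : ℕ}
    (hn : n < l ^ K) : substIter θ l K a₀ n = substFixedPoint θ l a₀ n := by
  have hn' : n < l ^ (n + 1) :=
    (Nat.lt_pow_self hl).trans (Nat.pow_lt_pow_right hl n.lt_succ_self)
  rw [substFixedPoint, ← substIter_eq_of_le ha₀ (Nat.le_add_right K (n + 1)) hn,
    ← substIter_eq_of_le ha₀ (Nat.le_add_left (n + 1) K) hn']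

end Iterates

section ConstantColumns

variable {A : Type*} (θ : A → ℕ → A) (l : ℕ)

/-- The column `{θ^k(a)_j : a ∈ A}` is a singleton (or `A` is empty). -/
def IsConstantColumn (k j : ℕ) : Prop :=
  ∀ a b : A, substIter θ l k a j = substIter θ l k b j

open Classical in
noncomputable def nonConstantColumns (k : ℕ) : Finset ℕ :=
  (range (l ^ k)).filter fun j => ¬ IsConstantColumn θ l k j

variable {θ l}

theorem isConstantColumn_of_notMem_nonConstantColumns {k j : ℕ} (hj : j < l ^ k)
    (h : j ∉ nonConstantColumns θ l k) : IsConstantColumn θ l k j := by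
  classical
  simpa [nonConstantColumns, hj] using h

theorem IsConstantColumn.add_of_div {k₁ k₂ j : ℕ}
    (h : IsConstantColumn θ l k₁ (j / l ^ k₂)) : IsConstantColumn θ l (k₁ + k₂) j := by
  intro a b
  rw [substIter_add, substIter_add, h a b]

theorem IsConstantColumn.add_of_mod {k₁ k₂ j : ℕ}
    (h : IsConstantColumn θ l k₂ (j % l ^ k₂)) : IsConstantColumn θ l (k₁ + k₂) j := by
  intro a b
  rw [substIter_add, substIter_add, h]

theorem card_nonConstantColumns_add_le (k₁ k₂ : ℕ) :
    #(nonConstantColumns θ l (k₁ + k₂))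
      ≤ #(nonConstantColumns θ l k₁) * #(nonConstantColumns θ l k₂) := by
  classical
  rw [← card_product]
  refine card_le_card_of_injOn (fun j => (j / l ^ k₂, j % l ^ k₂)) (fun j hj => ?_)
    (fun i _ j _ hij => Nat.ext_div_mod (Prod.ext_iff.1 hij).1 (Prod.ext_iff.1 hij).2)
  simp only [nonConstantColumns, coe_filter, mem_range, Set.mem_ofPred_eq, coe_product,
    Set.mem_prod, pow_add] at hj ⊢
  refine ⟨⟨Nat.div_lt_of_lt_mul (mul_comm (l ^ k₁) _ ▸ hj.1), fun h => hj.2 h.add_of_div⟩,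
    ⟨Nat.mod_lt _ (Nat.pos_of_mul_pos_left (j.zero_le.trans_lt hj.1)),
      fun h => hj.2 h.add_of_mod⟩⟩

theorem card_nonConstantColumns_mul_le (m k : ℕ) :
    #(nonConstantColumns θ l (m * k)) ≤ #(nonConstantColumns θ l k) ^ m := by
  induction m with
  | zero =>
    classical
    rw [pow_zero, Nat.zero_mul]
    exact (card_filter_le _ _).trans_eq (card_range 1)
  | succ m ih =>
    calc #(nonConstantColumns θ l ((m + 1) * k))
        ≤ #(nonConstantColumns θ l (m * k)) * #(nonConstantColumns θ l k) := by
          rw [Nat.succ_mul]; exact card_nonConstantColumns_add_le _ _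
      _ ≤ #(nonConstantColumns θ l k) ^ (m + 1) := by
          rw [pow_succ]; exact Nat.mul_le_mul_right _ ih

theorem card_nonConstantColumns_lt {k j : ℕ} (hj : j < l ^ k) (h : IsConstantColumn θ l k j) :
    #(nonConstantColumns θ l k) < l ^ k := by
  classical
  refine (card_lt_card ?_).trans_eq (card_range _)
  exact (filter_ssubset.2 ⟨j, mem_range.2 hj, not_not.2 h⟩)

theorem exists_isConstantColumn_of_columnNumber_eq_one (hc : columnNumber θ l = 1) :
    ∃ k, 1 ≤ k ∧ ∃ j, j < l ^ k ∧ IsConstantColumn θ l k j := by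
  have hpos : 0 < columnNumber θ l := hc ▸ Nat.one_pos
  have hmem := Nat.sInf_mem (Nat.nonempty_of_pos_sInf hpos)
  rw [← columnNumberOn, ← columnNumber, hc] at hmem
  obtain ⟨k, hk, j, hj, hcard⟩ := hmem
  obtain ⟨c, hc⟩ := Set.ncard_eq_one.1 hcard
  have hcol : ∀ a, substIter θ l k a j = c := fun a =>
    hc.subset (Set.mem_image_of_mem _ (Set.mem_univ a))
  exact ⟨k, hk, j, hj, fun a b => (hcol a).trans (hcol b).symm⟩

theorem substFixedPoint_eq_of_isConstantColumn (hl : 2 ≤ l) {a₀ : A} (ha₀ : θ a₀ 0 = a₀)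
    {k n : ℕ} (h : IsConstantColumn θ l k (n % l ^ k)) :
    substFixedPoint θ l a₀ n = substIter θ l k a₀ (n % l ^ k) := by
  have hn : n < l ^ (n + k) :=
    (Nat.lt_pow_self hl).trans_le (Nat.pow_le_pow_right (by omega) (Nat.le_add_right n k))
  rw [← substIter_eq_substFixedPoint hl ha₀ hn, substIter_add, h]

end ConstantColumns

section Weyl

theorem card_filter_mod_mem_Ico_le (S : Finset ℕ) (p ℓ N : ℕ) :
    #((Ico ℓ (ℓ + N)).filter fun n => n % p ∈ S) ≤ #S * (N / p + 2) :=
  calc #((Ico ℓ (ℓ + N)).filter fun n => n % p ∈ S)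
      ≤ #(S ×ˢ Icc (ℓ / p) ((ℓ + N) / p)) := by
        refine card_le_card_of_injOn (fun n => (n % p, n / p)) (fun n hn => ?_)
          (fun i _ j _ hij => Nat.ext_div_mod (Prod.ext_iff.1 hij).2 (Prod.ext_iff.1 hij).1)
        simp only [coe_filter, mem_Ico, Set.mem_ofPred_eq, coe_product, coe_Icc,
          Set.mem_prod, Set.mem_Icc, mem_coe] at hn ⊢
        exact ⟨hn.2, Nat.div_le_div_right hn.1.1, Nat.div_le_div_right hn.1.2.le⟩
    _ = #S * ((ℓ + N) / p + 1 - ℓ / p) := by rw [card_product, Nat.card_Icc]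
    _ ≤ #S * (N / p + 2) :=
        Nat.mul_le_mul_left _ (by grind [Nat.add_div_le_div_add_div_add_one ℓ N p])

theorem weylDist_le_of_eq_of_mod_notMem {B : Type*} {x y : ℕ → B} {p : ℕ} (S : Finset ℕ)
    (h : ∀ n, n % p ∉ S → x n = y n) : weylDist x y ≤ #S / p := by
  have hwindow : ∀ N ℓ : ℕ,
      ({n | ℓ ≤ n ∧ n < ℓ + N ∧ x n ≠ y n}.ncard : ℝ) ≤ #S * (N / p + 2) := by
    intro N ℓ
    have hsub : {n | ℓ ≤ n ∧ n < ℓ + N ∧ x n ≠ y n}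
        ⊆ ↑((Ico ℓ (ℓ + N)).filter fun n => n % p ∈ S) := by
      rintro n ⟨hℓ, hN, hne⟩
      simp only [coe_filter, mem_Ico, Set.mem_ofPred_eq]
      exact ⟨⟨hℓ, hN⟩, not_not.1 fun hS => hne (h n hS)⟩
    calc ({n | ℓ ≤ n ∧ n < ℓ + N ∧ x n ≠ y n}.ncard : ℝ)
        ≤ #((Ico ℓ (ℓ + N)).filter fun n => n % p ∈ S) := by
          exact_mod_cast (Set.ncard_le_ncard hsub (finite_toSet _)).trans_eq
            (Set.ncard_coe_finset _)
      _ ≤ #S * ((N / p : ℕ) + 2) := by exact_mod_cast card_filter_mod_mem_Ico_le S p ℓ N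
      _ ≤ #S * (N / p + 2) := by gcongr; exact Nat.cast_div_le
  have hbound : ∀ N ≥ 1, (⨆ ℓ : ℕ, ⨆ _ : 1 ≤ ℓ,
      ({n | ℓ ≤ n ∧ n < ℓ + N ∧ x n ≠ y n}.ncard : ℝ) / N) ≤ #S / p + 2 * #S / N := by
    intro N hN
    have hN : (0 : ℝ) < N := by exact_mod_cast hN
    have hnonneg : (0 : ℝ) ≤ #S / p + 2 * #S / N := by positivity
    refine Real.iSup_le (fun ℓ => Real.iSup_le (fun _ => ?_) hnonneg) hnonneg
    calc ({n | ℓ ≤ n ∧ n < ℓ + N ∧ x n ≠ y n}.ncard : ℝ) / N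
        ≤ #S * (N / p + 2) / N := by gcongr; exact hwindow N ℓ
      _ = #S / p + 2 * #S / N := by field_simp
  have htends : Tendsto (fun N : ℕ => (#S : ℝ) / p + 2 * #S / N) atTop (𝓝 (#S / p)) := by
    simpa using tendsto_const_nhds.add (tendsto_const_div_atTop_nhds_zero_nat (2 * #S : ℝ))
  calc weylDist x y ≤ limsup (fun N : ℕ => (#S : ℝ) / p + 2 * #S / N) atTop :=
        limsup_le_limsup (eventually_atTop.2 ⟨1, hbound⟩)
          (isCoboundedUnder_le_of_le atTop fun N =>
            Real.iSup_nonneg fun ℓ => Real.iSup_nonneg fun _ => by positivity)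
          htends.isBoundedUnder_le
    _ = #S / p := htends.limsup_eq

end Weyl

theorem exists_pow_periodic_weylDist_substFixedPoint_lt {A : Type*} {l : ℕ} (hl : 2 ≤ l)
    {θ : A → ℕ → A} {a₀ : A} (ha₀ : θ a₀ 0 = a₀) (hc : columnNumber θ l = 1) {ε : ℝ}
    (hε : 0 < ε) : ∃ k, 1 ≤ k ∧ ∃ v : ℕ → A,
      (∀ n, v (n + l ^ k) = v n) ∧ weylDist (substFixedPoint θ l a₀) v < ε := by
  obtain ⟨k₀, hk₀, j₀, hj₀, hconst⟩ := exists_isConstantColumn_of_columnNumber_eq_one hc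
  have hpos : (0 : ℝ) < l ^ k₀ := by positivity
  set ρ : ℝ := #(nonConstantColumns θ l k₀) / l ^ k₀
  have hρ : ρ < 1 := by
    rw [div_lt_one hpos]; exact_mod_cast card_nonConstantColumns_lt hj₀ hconst
  obtain ⟨m, hm⟩ := exists_pow_lt_of_lt_one hε hρ
  -- `m + 1` rather than `m` so that the period exponent is positive
  set k := (m + 1) * k₀
  have hk : 1 ≤ k := one_le_mul (Nat.le_add_left 1 m) hk₀
  refine ⟨k, hk, fun n => substIter θ l k a₀ (n % l ^ k),
    fun n => by simp only [Nat.add_mod_right], ?_⟩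
  have hagree : ∀ n, n % l ^ k ∉ nonConstantColumns θ l k →
      substFixedPoint θ l a₀ n = substIter θ l k a₀ (n % l ^ k) := fun n hn =>
    substFixedPoint_eq_of_isConstantColumn hl ha₀
      (isConstantColumn_of_notMem_nonConstantColumns (Nat.mod_lt _ (by positivity)) hn)
  calc weylDist (substFixedPoint θ l a₀) _
      ≤ #(nonConstantColumns θ l k) / (l ^ k : ℕ) := weylDist_le_of_eq_of_mod_notMem _ hagree
    _ ≤ ρ ^ (m + 1) := by
        rw [div_pow, Nat.cast_pow, pow_mul']
        gcongr
        exact_mod_cast card_nonConstantColumns_mul_le _ _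
    _ ≤ ρ ^ m := pow_le_pow_of_le_one (by positivity) hρ.le m.le_succ
    _ < ε := hm

theorem fixedPoint_WRAP_of_column_eq_one_general
    {A : Type*} (l : ℕ) (hl : 2 ≤ l)
    (θ : A → ℕ → A)
    (a₀ : A) (ha₀ : θ a₀ 0 = a₀)
    (hc : columnNumber θ l = 1) :
    (∀ ε : ℝ, 0 < ε → ∃ k, 1 ≤ k ∧ ∃ v : ℕ → A,
      (∀ n, v (n + l ^ k) = v n) ∧ weylDist (substFixedPoint θ l a₀) v < ε) ∧
    WRAPSeq (substFixedPoint θ l a₀) := by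
  have happrox := fun ε (hε : 0 < ε) =>
    exists_pow_periodic_weylDist_substFixedPoint_lt hl ha₀ hc hε
  refine ⟨happrox, fun ε hε => ?_⟩
  obtain ⟨k, -, v, hv, hlt⟩ := happrox ε hε
  exact ⟨v, ⟨l ^ k, Nat.one_le_pow _ _ (by omega), hv⟩, hlt⟩

/-- If a primitive substitution `θ` of constant length `l ≥ 2` has
column number `1`, then its fixed point `u` is approximable in the Weyl pseudo-metric
by `l^k`-periodic sequences; in particular `u` is Weyl rationally almost periodic. -/
theorem fixedPoint_WRAP_of_column_eq_one
    {A : Type*} [Finite A] (l : ℕ) (hl : 2 ≤ l)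
    (θ : A → ℕ → A) (hθ : SubstPrimitive θ l)
    (a₀ : A) (ha₀ : θ a₀ 0 = a₀)
    (hc : columnNumber θ l = 1) :
    (∀ ε : ℝ, 0 < ε → ∃ k, 1 ≤ k ∧ ∃ v : ℕ → A,
      (∀ n, v (n + l ^ k) = v n) ∧ weylDist (substFixedPoint θ l a₀) v < ε) ∧
    WRAPSeq (substFixedPoint θ l a₀) :=
  fixedPoint_WRAP_of_column_eq_one_general l hl θ a₀ ha₀ hc
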